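/- arXiv:2105.12342 — 3 statements merged into one kernel-verified Lean document; each statement's English description precedes it below -/
import Mathlib

section
/- Dual characterization of empirical DRO (Proposition 2.1). Let δ > 0, let n ≥ 1, let p = (p_1, …, p_n) be a probability vector with p_i > 0 for all i, and let f_1, …, f_n be real numbers. Then the minimum over all probability vectors q = (q_1, …, q_n) (q_i ≥ 0, Σ_i q_i = 1) of Σ_i q_i f_i + (1/δ) Σ_i p_i φ(q_i/p_i) equals the supremum over c ∈ ℝ of −(1/δ) Σ_i p_i φ*(−δ(f_i + c)) − c, where both sides are interpreted as elements of the extended reals. -/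
open scoped BigOperators

/-- The convex conjugate `φ*(ζ) = sup_z (ζ z − φ(z))` of an extended-real-valued
function `φ : ℝ → ℝ ∪ {+∞}`. -/
noncomputable def phiStar (φ : ℝ → EReal) (ζ : ℝ) : EReal :=
  ⨆ z : ℝ, ((ζ * z : ℝ) : EReal) - φ z

/-!
Weak duality is the Fenchel–Young inequality `ζ z - φ z ≤ φ*(ζ)`, summed with the weights `p i`
at `z i = q i / p i`.

For strong duality, drop the constraint `∑ q i = 1` and look at the set `A ⊆ ℝ × ℝ` of pairs
`(∑ q i, t)` with `t` above the primal objective at `q`; it is convex because `φ` is. Lower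
semicontinuity of `φ` makes bounded sublevel sets compact, so for every `r` below the primal value
`A` stays above some `r' > r` over a neighbourhood of mass `1`. Separating `A` from the open box
below `r'` over that neighbourhood gives a non-vertical line `t = r + μ (s - 1)` under `A`, a
Lagrange multiplier; substituting `q i = p i z i` in the conjugates shows that `c = -μ` has dual
value at least `r`.
-/

open Finset Set

namespace EReal

lemma coe_finset_sum {ι : Type*} (s : Finset ι) (g : ι → ℝ) :
    ((∑ i ∈ s, g i : ℝ) : EReal) = ∑ i ∈ s, (g i : EReal) :=
  map_sum (⟨⟨(↑), coe_zero⟩, coe_add⟩ : ℝ →+ EReal) g s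

lemma coe_mul_iSup_of_pos {ι : Sort*} {a : ℝ} (ha : 0 < a) (u : ι → EReal) :
    (a : EReal) * ⨆ i, u i = ⨆ i, (a : EReal) * u i :=
  have ha0 : (a : EReal) ≠ 0 := by exact_mod_cast ha.ne'
  Monotone.map_iSup_of_continuousAt
    ((continuousAt_mul (p := ((a : EReal), ⨆ i, u i)) (Or.inl ha0) (Or.inl ha0)
      (Or.inl (coe_ne_bot a)) (Or.inl (coe_ne_top a))).comp
      (continuous_const.prodMk continuous_id).continuousAt)
    (fun _ _ h => mul_le_mul_of_nonneg_left h (by exact_mod_cast ha.le))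
    (coe_mul_bot_of_pos ha)

lemma iSup_add_iSup_le {ι κ : Sort*} {u : ι → EReal} {v : κ → EReal} {a : EReal}
    (h : ∀ i j, u i + v j ≤ a) : (⨆ i, u i) + ⨆ j, v j ≤ a :=
  add_le_of_forall_lt fun _ hu _ hv => by
    obtain ⟨i, hi⟩ := lt_iSup_iff.1 hu
    obtain ⟨j, hj⟩ := lt_iSup_iff.1 hv
    exact (add_le_add hi.le hj.le).trans (h i j)

lemma sum_iSup_le_iSup_sum {ι κ : Type*} [DecidableEq ι] [Nonempty κ] (s : Finset ι)
    (u : ι → κ → EReal) : ∑ i ∈ s, ⨆ y, u i y ≤ ⨆ z : ι → κ, ∑ i ∈ s, u i (z i) := by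
  induction s using Finset.cons_induction with
  | empty => simp
  | cons j s hj ih =>
    rw [sum_cons]
    refine (add_le_add le_rfl ih).trans (iSup_add_iSup_le fun y z => ?_)
    refine le_iSup_of_le (Function.update z j y) (le_of_eq ?_)
    rw [sum_cons, Function.update_self]
    congr 1
    exact sum_congr rfl fun i hi => by rw [Function.update_of_ne (ne_of_mem_of_not_mem hi hj)]

lemma antitone_coe_neg_mul_sub {k : ℝ} (hk : 0 ≤ k) (c : ℝ) :
    Antitone fun S : EReal => ((-k : ℝ) : EReal) * S - c := fun _ _ hab => by
  simp only [coe_neg, EReal.neg_mul]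
  exact EReal.sub_le_sub
    (EReal.neg_le_neg_iff.2 (mul_le_mul_of_nonneg_left hab (by exact_mod_cast hk))) le_rfl

end EReal

lemma Convex.exists_affine_minorant {A : Set (ℝ × ℝ)} (hA : Convex ℝ A) {s₀ t₀ e r r' : ℝ}
    (h₀ : (s₀, t₀) ∈ A) (he : 0 < e) (hr : r < r')
    (hwin : ∀ y ∈ A, |y.1 - s₀| < e → r' ≤ y.2) :
    ∃ μ : ℝ, ∀ y ∈ A, r + μ * (y.1 - s₀) ≤ y.2 := by
  have hdisj : Disjoint (Metric.ball s₀ e ×ˢ Iio r') A := by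
    refine Set.disjoint_left.2 fun y ⟨hy₁, hy₂⟩ hyA => (hwin y hyA ?_).not_gt hy₂
    rwa [Metric.mem_ball, Real.dist_eq] at hy₁
  obtain ⟨ℓ, u, hU, hA'⟩ := geometric_hahn_banach_open
    ((convex_ball s₀ e).prod (convex_Iio r')) (Metric.isOpen_ball.prod isOpen_Iio) hA hdisj
  have hℓ (y : ℝ × ℝ) : ℓ y = ℓ (1, 0) * y.1 + ℓ (0, 1) * y.2 := by
    conv_lhs => rw [show y = y.1 • ((1 : ℝ), (0 : ℝ)) + y.2 • ((0 : ℝ), (1 : ℝ)) by ext <;> simp]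
    rw [map_add, map_smul, map_smul, smul_eq_mul, smul_eq_mul, mul_comm y.1, mul_comm y.2]
  have hlow : ℓ (s₀, r) < u := hU _ ⟨Metric.mem_ball_self he, hr⟩
  -- The separating line is not vertical: `(s₀, t₀) ∈ A` lies strictly above `(s₀, r)`.
  have hβ : 0 < ℓ (0, 1) := by
    have ht₀ : r' ≤ t₀ := hwin _ h₀ (by simpa using he)
    have := hlow.trans_le (hA' _ h₀)
    rw [hℓ (s₀, r), hℓ (s₀, t₀)] at this
    nlinarith
  refine ⟨-(ℓ (1, 0) / ℓ (0, 1)), fun y hy => le_of_mul_le_mul_left ?_ hβ⟩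
  have := hlow.trans_le (hA' y hy)
  rw [hℓ (s₀, r), hℓ y] at this
  field_simp
  nlinarith

namespace EmpiricalDRO

variable {n : ℕ} {φ : ℝ → EReal}

def epigraph (φ : ℝ → EReal) : Set (ℝ × ℝ) := {y | φ y.1 ≤ y.2}

lemma convex_epigraph
    (hconv : ∀ x y a b : ℝ, 0 ≤ a → 0 ≤ b → a + b = 1 →
      φ (a * x + b * y) ≤ (a : EReal) * φ x + (b : EReal) * φ y) :
    Convex ℝ (epigraph φ) := by
  intro y hy y' hy' a b ha hb hab
  calc φ (a * y.1 + b * y'.1) ≤ (a : EReal) * φ y.1 + (b : EReal) * φ y'.1 :=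
        hconv _ _ a b ha hb hab
    _ ≤ (a : EReal) * y.2 + (b : EReal) * y'.2 :=
        add_le_add (mul_le_mul_of_nonneg_left hy (by exact_mod_cast ha))
          (mul_le_mul_of_nonneg_left hy' (by exact_mod_cast hb))
    _ = ((a • y + b • y').2 : ℝ) := by simp

lemma isClosed_epigraph (hφ : LowerSemicontinuous φ) : IsClosed (epigraph φ) :=
  hφ.isClosed_epigraph.preimage
    (continuous_fst.prodMk (continuous_coe_real_ereal.comp continuous_snd))

lemma nonneg_of_mem_epigraph (hφ0 : ∀ z, 0 ≤ φ z) (hneg : ∀ z : ℝ, z < 0 → φ z = ⊤)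
    {y : ℝ × ℝ} (hy : y ∈ epigraph φ) : 0 ≤ y.1 ∧ 0 ≤ y.2 := by
  refine ⟨not_lt.1 fun h => ?_, by exact_mod_cast (hφ0 y.1).trans hy⟩
  exact EReal.coe_ne_top y.2 (top_le_iff.1 (hneg y.1 h ▸ hy))

/- A point `x i = (z i, g i)` encodes the likelihood ratio `z i = q i / p i` together with a real
upper bound `g i ≥ φ (z i)`; `mass` is then `∑ q i`, and `cost` is the primal objective with
`φ (z i)` replaced by `g i`. -/

def mass (p : Fin n → ℝ) : (Fin n → ℝ × ℝ) →ₗ[ℝ] ℝ where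
  toFun x := ∑ i, p i * (x i).1
  map_add' x y := by simp [mul_add, sum_add_distrib]
  map_smul' c x := by simp [mul_sum, mul_left_comm]

noncomputable def cost (p f : Fin n → ℝ) (δ : ℝ) : (Fin n → ℝ × ℝ) →ₗ[ℝ] ℝ where
  toFun x := ∑ i, p i * (x i).1 * f i + 1 / δ * ∑ i, p i * (x i).2
  map_add' x y := by simp [mul_add, add_mul, sum_add_distrib]; ring
  map_smul' c x := by simp [mul_sum, mul_add, mul_left_comm, mul_assoc]

lemma mass_apply (p : Fin n → ℝ) (x : Fin n → ℝ × ℝ) : mass p x = ∑ i, p i * (x i).1 := rfl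

lemma cost_apply (p f : Fin n → ℝ) (δ : ℝ) (x : Fin n → ℝ × ℝ) :
    cost p f δ x = ∑ i, p i * (x i).1 * f i + 1 / δ * ∑ i, p i * (x i).2 := rfl

variable {p f : Fin n → ℝ} {δ : ℝ}

lemma sum_pairing_eq (hδ : δ ≠ 0) (c : ℝ) (x : Fin n → ℝ × ℝ) :
    ∑ i, p i * (-δ * (f i + c) * (x i).1 - (x i).2) = -δ * (cost p f δ x + c * mass p x) := by
  simp only [cost_apply, mass_apply, mul_sum, ← sum_add_distrib]
  exact sum_congr rfl fun i _ => by field_simp; ring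

lemma mem_Icc_of_cost_le (hφ0 : ∀ z, 0 ≤ φ z) (hneg : ∀ z : ℝ, z < 0 → φ z = ⊤)
    (hp : ∀ i, 0 < p i) (hδ : 0 < δ) {m r : ℝ} {x : Fin n → ℝ × ℝ}
    (hx : ∀ i, x i ∈ epigraph φ) (hm : mass p x ≤ m) (hc : cost p f δ x ≤ r) (i : Fin n) :
    x i ∈ Icc 0 (m / p i, δ * (r + m * ∑ j, |f j|) / p i) := by
  have hz j := (nonneg_of_mem_epigraph hφ0 hneg (hx j)).1
  have hg j := (nonneg_of_mem_epigraph hφ0 hneg (hx j)).2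
  have hpz j : p j * (x j).1 ≤ m :=
    (single_le_sum (fun k _ => mul_nonneg (hp k).le (hz k)) (mem_univ j)).trans hm
  have hlin : -(m * ∑ j, |f j|) ≤ ∑ j, p j * (x j).1 * f j := by
    rw [mul_sum, ← sum_neg_distrib]
    refine sum_le_sum fun j _ => ?_
    nlinarith [abs_nonneg (f j), neg_abs_le (f j), mul_nonneg (hp j).le (hz j), hpz j]
  have hpg : p i * (x i).2 ≤ ∑ j, p j * (x j).2 :=
    single_le_sum (fun k _ => mul_nonneg (hp k).le (hg k)) (mem_univ i)
  have hsum : 1 / δ * ∑ j, p j * (x j).2 ≤ r + m * ∑ j, |f j| := by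
    rw [cost_apply] at hc
    linarith
  rw [one_div, inv_mul_le_iff₀ hδ] at hsum
  refine ⟨⟨hz i, hg i⟩, (le_div_iff₀ (hp i)).2 ?_, (le_div_iff₀ (hp i)).2 ?_⟩ <;> linarith [hpz i]

lemma isCompact_sublevel (hφ0 : ∀ z, 0 ≤ φ z) (hneg : ∀ z : ℝ, z < 0 → φ z = ⊤)
    (hlsc : LowerSemicontinuous φ) (hp : ∀ i, 0 < p i) (hδ : 0 < δ) (m r : ℝ) :
    IsCompact ((univ.pi fun _ => epigraph φ) ∩ {x | mass p x ≤ m} ∩ {x | cost p f δ x ≤ r}) :=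
  (isCompact_univ_pi fun _ => isCompact_Icc).of_isClosed_subset
    (((isClosed_set_pi fun _ _ => isClosed_epigraph hlsc).inter
      (isClosed_le (mass p).continuous_of_finiteDimensional continuous_const)).inter
      (isClosed_le (cost p f δ).continuous_of_finiteDimensional continuous_const))
    fun _ ⟨⟨hx, hm⟩, hc⟩ i _ => mem_Icc_of_cost_le hφ0 hneg hp hδ (mem_univ_pi.1 hx) hm hc i

lemma exists_cost_gt_near_mass_one (hφ0 : ∀ z, 0 ≤ φ z) (hneg : ∀ z : ℝ, z < 0 → φ z = ⊤)
    (hlsc : LowerSemicontinuous φ) (hp : ∀ i, 0 < p i) (hδ : 0 < δ) {r : ℝ}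
    (h : ∀ x, (∀ i, x i ∈ epigraph φ) → mass p x = 1 → r < cost p f δ x) :
    ∃ e > 0, ∀ x, (∀ i, x i ∈ epigraph φ) → |mass p x - 1| < e → r < cost p f δ x := by
  set K := (univ.pi fun _ => epigraph φ) ∩ {x | mass p x ≤ 2} ∩ {x | cost p f δ x ≤ r}
  have hK : IsClosed (mass p '' K) :=
    ((isCompact_sublevel hφ0 hneg hlsc hp hδ 2 r).image
      (mass p).continuous_of_finiteDimensional).isClosed
  have h1 : (1 : ℝ) ∉ mass p '' K := fun ⟨x, ⟨⟨hx, _⟩, hc⟩, hm⟩ =>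
    (h x (mem_univ_pi.1 hx) hm).not_ge hc
  obtain ⟨e, he, hball⟩ := Metric.isOpen_iff.1 hK.isOpen_compl 1 h1
  refine ⟨min e 1, lt_min he one_pos, fun x hx hm => not_le.1 fun hc => ?_⟩
  refine hball (?_ : mass p x ∈ Metric.ball 1 e) ⟨x, ⟨⟨mem_univ_pi.2 hx, ?_⟩, hc⟩, rfl⟩
  · rw [Metric.mem_ball, Real.dist_eq]
    exact hm.trans_le (min_le_left _ _)
  · show mass p x ≤ 2
    linarith [(abs_lt.1 hm).2, min_le_right e 1]

lemma exists_multiplier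
    (hconv : ∀ x y a b : ℝ, 0 ≤ a → 0 ≤ b → a + b = 1 →
      φ (a * x + b * y) ≤ (a : EReal) * φ x + (b : EReal) * φ y)
    (hlsc : LowerSemicontinuous φ) (hφ0 : ∀ z, 0 ≤ φ z) (hone : φ 1 = 0)
    (hneg : ∀ z : ℝ, z < 0 → φ z = ⊤) (hp : ∀ i, 0 < p i) (hps : ∑ i, p i = 1) (hδ : 0 < δ)
    {r r' : ℝ} (hrr' : r < r')
    (h : ∀ x, (∀ i, x i ∈ epigraph φ) → mass p x = 1 → r' < cost p f δ x) :
    ∃ μ : ℝ, ∀ x, (∀ i, x i ∈ epigraph φ) → r + μ * (mass p x - 1) ≤ cost p f δ x := by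
  obtain ⟨e, he, hwin⟩ := exists_cost_gt_near_mass_one hφ0 hneg hlsc hp hδ h
  set A : Set (ℝ × ℝ) :=
    {y | ∃ x, (∀ i, x i ∈ epigraph φ) ∧ mass p x = y.1 ∧ cost p f δ x ≤ y.2}
  have hA : Convex ℝ A := by
    rintro y ⟨x, hx, hm, hc⟩ y' ⟨x', hx', hm', hc'⟩ a b ha hb hab
    refine ⟨a • x + b • x', fun i => convex_epigraph hconv (hx i) (hx' i) ha hb hab, ?_, ?_⟩
    · simp [hm, hm']
    · simpa using add_le_add (mul_le_mul_of_nonneg_left hc ha) (mul_le_mul_of_nonneg_left hc' hb)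
  set x₀ : Fin n → ℝ × ℝ := fun _ => (1, 0)
  have hx₀ : (1, cost p f δ x₀) ∈ A :=
    ⟨x₀, fun _ => hone.le, by simpa [x₀, mass_apply] using hps, le_rfl⟩
  obtain ⟨μ, hμ⟩ := hA.exists_affine_minorant hx₀ he hrr'
    fun y ⟨x, hx, hm, hc⟩ hy => ((hwin x hx (hm ▸ hy)).trans_le hc).le
  exact ⟨μ, fun x hx => hμ (mass p x, cost p f δ x) ⟨x, hx, rfl, le_rfl⟩⟩

lemma coe_sub_le_phiStar {z g : ℝ} (h : φ z ≤ g) (ζ : ℝ) :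
    ((ζ * z - g : ℝ) : EReal) ≤ phiStar φ ζ :=
  calc ((ζ * z - g : ℝ) : EReal) = ((ζ * z : ℝ) : EReal) - g := EReal.coe_sub _ _
    _ ≤ ((ζ * z : ℝ) : EReal) - φ z := EReal.sub_le_sub le_rfl h
    _ ≤ phiStar φ ζ := le_iSup (fun z => ((ζ * z : ℝ) : EReal) - φ z) z

variable (φ p f δ) in
noncomputable def primalObjective (q : Fin n → ℝ) : EReal :=
  ((∑ i, q i * f i : ℝ) : EReal)
    + ((1 / δ : ℝ) : EReal) * ∑ i, ((p i : ℝ) : EReal) * φ (q i / p i)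

variable (φ p f δ) in
noncomputable def dualObjective (c : ℝ) : EReal :=
  ((-(1 / δ) : ℝ) : EReal) * (∑ i, ((p i : ℝ) : EReal) * phiStar φ (-δ * (f i + c)))
    - (c : EReal)

lemma primalObjective_le_cost (hp : ∀ i, 0 < p i) (hδ : 0 < δ) {x : Fin n → ℝ × ℝ}
    (hx : ∀ i, x i ∈ epigraph φ) :
    primalObjective φ p f δ (fun i => p i * (x i).1) ≤ cost p f δ x := by
  rw [cost_apply, EReal.coe_add, EReal.coe_mul, primalObjective]
  refine add_le_add le_rfl
    (mul_le_mul_of_nonneg_left ?_ (by exact_mod_cast (one_div_pos.2 hδ).le))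
  rw [EReal.coe_finset_sum]
  refine sum_le_sum fun i _ => ?_
  rw [mul_div_cancel_left₀ _ (hp i).ne', EReal.coe_mul]
  exact mul_le_mul_of_nonneg_left (hx i) (by exact_mod_cast (hp i).le)

lemma phi_ne_top_of_primalObjective_ne_top (hφ0 : ∀ z, 0 ≤ φ z) (hp : ∀ i, 0 < p i)
    (hδ : 0 < δ) {q : Fin n → ℝ} (h : primalObjective φ p f δ q ≠ ⊤) (i : Fin n) :
    φ (q i / p i) ≠ ⊤ := by
  intro hi
  have hsum : ∑ j, ((p j : ℝ) : EReal) * φ (q j / p j) = ⊤ := by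
    refine top_le_iff.1 ?_
    rw [← EReal.coe_mul_top_of_pos (hp i), ← hi]
    exact single_le_sum (f := fun j => ((p j : ℝ) : EReal) * φ (q j / p j))
      (fun j _ => mul_nonneg (by exact_mod_cast (hp j).le) (hφ0 _)) (mem_univ i)
  rw [primalObjective, hsum, EReal.coe_mul_top_of_pos (one_div_pos.2 hδ),
    EReal.coe_add_top] at h
  exact h rfl

lemma primalObjective_eq_cost (hφ0 : ∀ z, 0 ≤ φ z) (hp : ∀ i, 0 < p i) {q : Fin n → ℝ}
    (hq : ∀ i, φ (q i / p i) ≠ ⊤) :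
    primalObjective φ p f δ q = cost p f δ (fun i => (q i / p i, (φ (q i / p i)).toReal)) := by
  have hterm (i : Fin n) : ((p i : ℝ) : EReal) * φ (q i / p i)
      = ((p i * (φ (q i / p i)).toReal : ℝ) : EReal) := by
    rw [EReal.coe_mul, EReal.coe_toReal (hq i) ((hφ0 _).trans_lt' EReal.bot_lt_zero).ne']
  rw [primalObjective, sum_congr rfl fun i _ => hterm i, ← EReal.coe_finset_sum,
    ← EReal.coe_mul, ← EReal.coe_add, cost_apply]
  simp only [mul_div_cancel₀ _ (hp _).ne']

lemma dualObjective_le_cost (hp : ∀ i, 0 < p i) (hδ : 0 < δ) {x : Fin n → ℝ × ℝ}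
    (hx : ∀ i, x i ∈ epigraph φ) (hm : mass p x = 1) (c : ℝ) :
    dualObjective φ p f δ c ≤ cost p f δ x := by
  have hS : ((-δ * (cost p f δ x + c * mass p x) : ℝ) : EReal)
      ≤ ∑ i, ((p i : ℝ) : EReal) * phiStar φ (-δ * (f i + c)) := by
    rw [← sum_pairing_eq hδ.ne', EReal.coe_finset_sum]
    refine sum_le_sum fun i _ => ?_
    rw [EReal.coe_mul]
    exact mul_le_mul_of_nonneg_left (coe_sub_le_phiStar (hx i) _) (by exact_mod_cast (hp i).le)
  refine (EReal.antitone_coe_neg_mul_sub (one_div_pos.2 hδ).le c hS).trans_eq ?_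
  dsimp only
  rw [← EReal.coe_mul, ← EReal.coe_sub, hm]
  congr 1
  field_simp
  ring

lemma dualObjective_le_primalObjective (hφ0 : ∀ z, 0 ≤ φ z) (hp : ∀ i, 0 < p i) (hδ : 0 < δ)
    {q : Fin n → ℝ} (hq : ∑ i, q i = 1) (c : ℝ) :
    dualObjective φ p f δ c ≤ primalObjective φ p f δ q := by
  by_cases htop : primalObjective φ p f δ q = ⊤
  · exact htop ▸ le_top
  have hfin := phi_ne_top_of_primalObjective_ne_top hφ0 hp hδ htop
  rw [primalObjective_eq_cost hφ0 hp hfin]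
  refine dualObjective_le_cost hp hδ (fun i => ?_) ?_ c
  · exact (EReal.coe_toReal (hfin i) ((hφ0 _).trans_lt' EReal.bot_lt_zero).ne').ge
  · simpa [mass_apply, mul_div_cancel₀ _ (hp _).ne'] using hq

lemma le_dualObjective (hφ0 : ∀ z, 0 ≤ φ z) (hp : ∀ i, 0 < p i) (hδ : 0 < δ) {r μ : ℝ}
    (h : ∀ x, (∀ i, x i ∈ epigraph φ) → r + μ * (mass p x - 1) ≤ cost p f δ x) :
    (r : EReal) ≤ dualObjective φ p f δ (-μ) := by
  have hS : ∑ i, ((p i : ℝ) : EReal) * phiStar φ (-δ * (f i + -μ))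
      ≤ ((δ * (μ - r) : ℝ) : EReal) := by
    simp only [phiStar, EReal.coe_mul_iSup_of_pos (hp _)]
    refine (EReal.sum_iSup_le_iSup_sum _ _).trans (iSup_le fun z => ?_)
    by_cases hz : ∃ j, φ (z j) = ⊤
    · obtain ⟨j, hj⟩ := hz
      rw [← add_sum_erase _ _ (mem_univ j), hj, EReal.sub_top, EReal.coe_mul_bot_of_pos (hp j),
        EReal.bot_add]
      exact bot_le
    push Not at hz
    set x : Fin n → ℝ × ℝ := fun i => (z i, (φ (z i)).toReal)
    have hφx (i : Fin n) : φ (z i) = ((x i).2 : EReal) :=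
      (EReal.coe_toReal (hz i) ((hφ0 _).trans_lt' EReal.bot_lt_zero).ne').symm
    have hx (i : Fin n) : x i ∈ epigraph φ := (hφx i).le
    calc ∑ i, ((p i : ℝ) : EReal) * (((-δ * (f i + -μ) * z i : ℝ) : EReal) - φ (z i))
        = ((∑ i, p i * (-δ * (f i + -μ) * (x i).1 - (x i).2) : ℝ) : EReal) := by
          rw [EReal.coe_finset_sum]
          refine sum_congr rfl fun i _ => ?_
          rw [hφx, ← EReal.coe_sub, ← EReal.coe_mul]
      _ = ((-δ * (cost p f δ x + -μ * mass p x) : ℝ) : EReal) := by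
          rw [sum_pairing_eq hδ.ne']
      _ ≤ ((δ * (μ - r) : ℝ) : EReal) := by
          have := h x hx
          exact EReal.coe_le_coe_iff.2 (by nlinarith)
  calc (r : EReal)
      = ((-(1 / δ) : ℝ) : EReal) * ((δ * (μ - r) : ℝ) : EReal) - ((-μ : ℝ) : EReal) := by
        rw [← EReal.coe_mul, ← EReal.coe_sub]
        congr 1
        field_simp
        ring
    _ ≤ dualObjective φ p f δ (-μ) :=
        EReal.antitone_coe_neg_mul_sub (one_div_pos.2 hδ).le _ hS

end EmpiricalDRO

open EmpiricalDRO in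
theorem empirical_dro_duality_general
    (φ : ℝ → EReal)
    (hconv : ∀ x y a b : ℝ, 0 ≤ a → 0 ≤ b → a + b = 1 →
      φ (a * x + b * y) ≤ (a : EReal) * φ x + (b : EReal) * φ y)
    (hlsc : LowerSemicontinuous φ)
    (hnonneg : ∀ z : ℝ, 0 ≤ z → 0 ≤ φ z)
    (hone : φ 1 = 0)
    (hneg : ∀ z : ℝ, z < 0 → φ z = ⊤)
    (n : ℕ)
    (p : Fin n → ℝ) (hp : ∀ i, 0 < p i) (hps : ∑ i, p i = 1)
    (f : Fin n → ℝ) (δ : ℝ) (hδ : 0 < δ) :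
    (⨅ q : {q : Fin n → ℝ // (∀ i, 0 ≤ q i) ∧ ∑ i, q i = 1},
        ((∑ i, q.1 i * f i : ℝ) : EReal)
          + ((1 / δ : ℝ) : EReal) * ∑ i, ((p i : ℝ) : EReal) * φ (q.1 i / p i))
      = ⨆ c : ℝ,
        ((-(1 / δ) : ℝ) : EReal) * (∑ i, ((p i : ℝ) : EReal) * phiStar φ (-δ * (f i + c)))
          - (c : EReal) := by
  have hφ0 (z : ℝ) : 0 ≤ φ z := by
    rcases lt_or_ge z 0 with hz | hz
    · exact (hneg z hz).symm ▸ le_top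
    · exact hnonneg z hz
  change ⨅ q : {q : Fin n → ℝ // (∀ i, 0 ≤ q i) ∧ ∑ i, q i = 1}, primalObjective φ p f δ q.1
    = ⨆ c, dualObjective φ p f δ c
  refine le_antisymm (EReal.ge_of_forall_gt_iff_ge.1 fun r hr => ?_)
    (iSup_le fun c => le_iInf fun q => dualObjective_le_primalObjective hφ0 hp hδ q.2.2 c)
  obtain ⟨r', hrr', hr'⟩ := EReal.exists_between_coe_real hr
  have hfeas (x : Fin n → ℝ × ℝ) (hx : ∀ i, x i ∈ epigraph φ) (hm : mass p x = 1) :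
      r' < cost p f δ x := by
    have hq : (∀ i, 0 ≤ p i * (x i).1) ∧ ∑ i, p i * (x i).1 = 1 :=
      ⟨fun i => mul_nonneg (hp i).le (nonneg_of_mem_epigraph hφ0 hneg (hx i)).1, hm⟩
    exact EReal.coe_lt_coe_iff.1 <| hr'.trans_le <|
      (iInf_le (fun q : {q : Fin n → ℝ // (∀ i, 0 ≤ q i) ∧ ∑ i, q i = 1} =>
        primalObjective φ p f δ q.1) ⟨_, hq⟩).trans (primalObjective_le_cost hp hδ hx)
  obtain ⟨μ, hμ⟩ := exists_multiplier hconv hlsc hφ0 hone hneg hp hps hδ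
    (EReal.coe_lt_coe_iff.1 hrr') hfeas
  exact (le_dualObjective hφ0 hp hδ hμ).trans (le_iSup _ (-μ))

/-- Dual characterization of the empirical DRO problem (Proposition 2.1):
for `δ > 0`, the minimum over probability vectors `q` of
`Σ q_i f_i + (1/δ) Σ p_i φ(q_i/p_i)` equals the supremum over `c ∈ ℝ` of
`−(1/δ) Σ p_i φ*(−δ(f_i + c)) − c`, both sides in the extended reals. -/
theorem empirical_dro_duality
    (φ : ℝ → EReal)
    (hconv : ∀ x y a b : ℝ, 0 ≤ a → 0 ≤ b → a + b = 1 →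
      φ (a * x + b * y) ≤ (a : EReal) * φ x + (b : EReal) * φ y)
    (hlsc : LowerSemicontinuous φ)
    (hnonneg : ∀ z : ℝ, 0 ≤ z → 0 ≤ φ z)
    (hone : φ 1 = 0)
    (hneg : ∀ z : ℝ, z < 0 → φ z = ⊤)
    (n : ℕ) (hn : 1 ≤ n)
    (p : Fin n → ℝ) (hp : ∀ i, 0 < p i) (hps : ∑ i, p i = 1)
    (f : Fin n → ℝ) (δ : ℝ) (hδ : 0 < δ) :
    (⨅ q : {q : Fin n → ℝ // (∀ i, 0 ≤ q i) ∧ ∑ i, q i = 1},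
        ((∑ i, q.1 i * f i : ℝ) : EReal)
          + ((1 / δ : ℝ) : EReal) * ∑ i, ((p i : ℝ) : EReal) * φ (q.1 i / p i))
      = ⨆ c : ℝ,
        ((-(1 / δ) : ℝ) : EReal) * (∑ i, ((p i : ℝ) : EReal) * phiStar φ (-δ * (f i + c)))
          - (c : EReal) :=
  empirical_dro_duality_general φ hconv hlsc hnonneg hone hneg n p hp hps f δ hδ
end

section
/- Worst-case sensitivity equals the scaled variance of the reward (equation (19)). Let p = (p_1, …, p_n) be a probability vector with p_i > 0 and let f_1, …, f_n be real numbers. For ε > 0 let Q(ε) denote a minimizer over probability vectors q of Σ_i q_i f_i + (1/ε) Σ_i p_i φ(q_i/p_i), and set Q(0) = p. Then there exists ε₀ > 0 such that for every ε ∈ (0, ε₀) the minimizer Q(ε) exists and is unique, and the map ε ↦ E_{Q(ε)}[f] = Σ_i q_i(ε) f_i is right-differentiable at ε = 0 with −(d/dε) E_{Q(ε)}[f] |_{ε=0} = (1/φ''(1)) · Var_{P_n}[f], where Var_{P_n}[f] = Σ_i p_i f_i² − (Σ_i p_i f_i)². -/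
open scoped BigOperators Topology

noncomputable section

/-- The real-valued version of `φ`. -/
def phiR (φ : ℝ → EReal) (z : ℝ) : ℝ := (φ z).toReal

/-- `φ''(1)`, the second derivative of (the real version of) `φ` at `z = 1`. -/
def phiPP1 (φ : ℝ → EReal) : ℝ := deriv (deriv (phiR φ)) 1

/-- Standing assumptions on the divergence function `φ`. -/
def PhiOK (φ : ℝ → EReal) : Prop :=
  (∀ x y a b : ℝ, 0 ≤ a → 0 ≤ b → a + b = 1 →
      φ (a * x + b * y) ≤ (a : EReal) * φ x + (b : EReal) * φ y) ∧
  LowerSemicontinuous φ ∧ (∀ z : ℝ, 0 ≤ z → 0 ≤ φ z) ∧ φ 1 = 0 ∧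
  (∀ z : ℝ, z < 0 → φ z = ⊤)

/-- `φ` is finite and twice continuously differentiable near `z = 1`, `φ''(1) > 0`. -/
def PhiSmooth (φ : ℝ → EReal) : Prop :=
  ∃ U : Set ℝ, IsOpen U ∧ (1 : ℝ) ∈ U ∧ (∀ z ∈ U, φ z = ((phiR φ z : ℝ) : EReal)) ∧
    ContDiffOn ℝ 2 (phiR φ) U ∧ 0 < phiPP1 φ

/-- The penalized objective `Σ_i q_i f_i + (1/ε) Σ_i p_i φ(q_i / p_i)`, valued in the
extended reals. -/
def wcObj (φ : ℝ → EReal) {n : ℕ} (p : Fin n → ℝ) (f : Fin n → ℝ) (ε : ℝ)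
    (q : Fin n → ℝ) : EReal :=
  ((∑ i, q i * f i : ℝ) : EReal)
    + ((1 / ε : ℝ) : EReal) * ∑ i, ((p i : ℝ) : EReal) * φ (q i / p i)

/-!
Near `1` the real function `Φ = phiR φ` has `Φ'' > 0`, so `Φ'` has a local inverse `ψ` with
`ψ' = 1 / φ''(1)`, and the first-order conditions suggest `Q(ε)ᵢ = pᵢ ψ(s(ε) - ε fᵢ)`, the
multiplier `s(ε)` being fixed by `∑ Q(ε)ᵢ = 1` through the implicit function theorem, with
`s'(0) = E_p[f]`.
The tangent line of the convex `Φ` at `Q(ε)ᵢ / pᵢ` has slope `s(ε) - ε fᵢ`; summing these tangent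
inequalities, the multiplier terms cancel on the simplex and `Q(ε)` is the unique minimiser, by
strict convexity of `Φ` near `1`. Finally `∑ pᵢ ψ(s(ε) - ε fᵢ) fᵢ` has derivative
`ψ' (E_p[f]² - E_p[f²])` at `0`.
-/

open Filter Set

theorem EReal.coe_finset_sum_s16 {ι : Type*} (s : Finset ι) (f : ι → ℝ) :
    ((∑ i ∈ s, f i : ℝ) : EReal) = ∑ i ∈ s, (f i : EReal) :=
  map_sum (⟨⟨Real.toEReal, EReal.coe_zero⟩, EReal.coe_add⟩ : ℝ →+ EReal) f s

namespace PhiOK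

variable {φ : ℝ → EReal}

theorem nonneg (hφ : PhiOK φ) (z : ℝ) : 0 ≤ φ z := by
  rcases lt_or_ge z 0 with hz | hz
  · rw [hφ.2.2.2.2 z hz]
    exact le_top
  · exact hφ.2.2.1 z hz

theorem nonneg_of_ne_top (hφ : PhiOK φ) {z : ℝ} (hz : φ z ≠ ⊤) : 0 ≤ z :=
  not_lt.mp fun hneg => hz (hφ.2.2.2.2 z hneg)

theorem coe_phiR (hφ : PhiOK φ) {z : ℝ} (hz : φ z ≠ ⊤) : ((phiR φ z : ℝ) : EReal) = φ z :=
  EReal.coe_toReal hz (ne_bot_of_le_ne_bot EReal.zero_ne_bot (hφ.nonneg z))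

theorem convexOn_phiR (hφ : PhiOK φ) : ConvexOn ℝ {z | φ z ≠ ⊤} (phiR φ) := by
  have hmix : ∀ ⦃x⦄, φ x ≠ ⊤ → ∀ ⦃y⦄, φ y ≠ ⊤ → ∀ ⦃a b : ℝ⦄, 0 ≤ a → 0 ≤ b → a + b = 1 →
      φ (a * x + b * y) ≤ ((a * phiR φ x + b * phiR φ y : ℝ) : EReal) := by
    intro x hx y hy a b ha hb hab
    simpa only [EReal.coe_add, EReal.coe_mul, hφ.coe_phiR hx, hφ.coe_phiR hy]
      using hφ.1 x y a b ha hb hab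
  have hdom : Convex ℝ {z | φ z ≠ ⊤} := fun x hx y hy a b ha hb hab =>
    ne_top_of_le_ne_top (EReal.coe_ne_top _) (hmix hx hy ha hb hab)
  refine ⟨hdom, fun x hx y hy a b ha hb hab => ?_⟩
  rw [← EReal.coe_le_coe_iff, hφ.coe_phiR (hdom hx hy ha hb hab)]
  exact hmix hx hy ha hb hab

end PhiOK

theorem ConvexOn.add_mul_sub_lt_of_strictConvexOn {D B : Set ℝ} {Φ : ℝ → ℝ} {z₀ z d : ℝ}
    (hD : ConvexOn ℝ D Φ) (hB : StrictConvexOn ℝ B Φ) (hBD : B ⊆ D) (hz₀ : B ∈ 𝓝 z₀)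
    (hd : HasDerivAt Φ d z₀) (hz : z ∈ D) (hne : z ≠ z₀) :
    Φ z₀ + d * (z - z₀) < Φ z := by
  obtain ⟨l, u, ⟨hl, hu⟩, hluB⟩ := mem_nhds_iff_exists_Ioo_subset.mp hz₀
  have hz₀B : z₀ ∈ B := hluB ⟨hl, hu⟩
  have hmono := hD.slope_mono (hBD hz₀B)
  -- strict convexity on `B` separates the tangent from the secant to some `m ∈ B` between `z₀`
  -- and `z`; convexity on `D` makes the slope of the secant to `z` even further from `d`
  have key : 0 < (z - z₀) * (slope Φ z₀ z - d) := by
    rcases hne.lt_or_gt with hlt | hgt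
    · set m := max z ((l + z₀) / 2)
      have hmB : m ∈ B :=
        hluB ⟨lt_max_of_lt_right (by linarith), max_lt (hlt.trans hu) (by linarith)⟩
      have hm : m < z₀ := max_lt hlt (by linarith)
      have h1 : slope Φ m z₀ < d := hB.slope_lt_of_hasDerivAt hmB hz₀B hm hd
      have h2 : slope Φ z₀ z ≤ slope Φ z₀ m :=
        hmono ⟨hz, hne⟩ ⟨hBD hmB, hm.ne⟩ (le_max_left _ _)
      rw [slope_comm Φ z₀ m] at h2
      nlinarith
    · set m := min z ((z₀ + u) / 2)
      have hmB : m ∈ B :=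
        hluB ⟨lt_min (hl.trans hgt) (by linarith), min_lt_of_right_lt (by linarith)⟩
      have hm : z₀ < m := lt_min hgt (by linarith)
      have h1 : d < slope Φ z₀ m := hB.lt_slope_of_hasDerivAt hz₀B hmB hm hd
      have h2 : slope Φ z₀ m ≤ slope Φ z₀ z :=
        hmono ⟨hBD hmB, hm.ne'⟩ ⟨hz, hne⟩ (min_le_left _ _)
      nlinarith
  have hsec : Φ z = Φ z₀ + (z - z₀) * slope Φ z₀ z := by
    rw [← smul_eq_mul, sub_smul_slope, vsub_eq_sub]; ring
  rw [hsec]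
  nlinarith

section TiltedSum

variable {ι : Type*} [Fintype ι] {Φ : ℝ → ℝ} {D : Set ℝ} {p z y q : ι → ℝ}

theorem sum_tangent_lt_sum (hp : ∀ i, 0 < p i)
    (htan : ∀ i, ∀ w ∈ D, w ≠ z i → Φ (z i) + y i * (w - z i) < Φ w) (hq : ∀ i, q i / p i ∈ D)
    (hne : q ≠ fun i => p i * z i) :
    ∑ i, (p i * Φ (z i) + y i * (q i - p i * z i)) < ∑ i, p i * Φ (q i / p i) := by
  have hterm : ∀ i, p i * Φ (z i) + y i * (q i - p i * z i)
      = p i * (Φ (z i) + y i * (q i / p i - z i)) := fun i => by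
    field_simp [(hp i).ne']
  have hle : ∀ i, q i ≠ p i * z i →
      p i * Φ (z i) + y i * (q i - p i * z i) < p i * Φ (q i / p i) := fun i hi => by
    rw [hterm]
    refine mul_lt_mul_of_pos_left (htan i _ (hq i) ?_) (hp i)
    rwa [ne_eq, div_eq_iff (hp i).ne', mul_comm]
  obtain ⟨j, hj⟩ := Function.ne_iff.mp hne
  refine Finset.sum_lt_sum (fun i _ => ?_) ⟨j, Finset.mem_univ j, hle j hj⟩
  by_cases hi : q i = p i * z i
  · simp [hi, (hp i).ne']
  · exact (hle i hi).le

theorem sum_mul_add_inv_mul_sum_lt {f : ι → ℝ} {s ε : ℝ} (hε : 0 < ε) (hp : ∀ i, 0 < p i)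
    (htan : ∀ i, ∀ w ∈ D, w ≠ z i → Φ (z i) + (s - ε * f i) * (w - z i) < Φ w)
    (hq : ∀ i, q i / p i ∈ D) (hsum : ∑ i, q i = ∑ i, p i * z i)
    (hne : q ≠ fun i => p i * z i) :
    ∑ i, p i * z i * f i + ε⁻¹ * ∑ i, p i * Φ (z i)
      < ∑ i, q i * f i + ε⁻¹ * ∑ i, p i * Φ (q i / p i) := by
  have hlt := sum_tangent_lt_sum hp htan hq hne
  have hlin : ∑ i, (s - ε * f i) * (q i - p i * z i)
      = s * (∑ i, q i - ∑ i, p i * z i) - ε * (∑ i, q i * f i - ∑ i, p i * z i * f i) := by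
    simp only [mul_sub, Finset.mul_sum, ← Finset.sum_sub_distrib]
    exact Finset.sum_congr rfl fun i _ => by ring
  rw [Finset.sum_add_distrib, hlin, hsum] at hlt
  have := mul_lt_mul_of_pos_left hlt (inv_pos.mpr hε)
  field_simp at this ⊢
  linarith

end TiltedSum

section WorstCase

variable {φ : ℝ → EReal} {n : ℕ} {p f q : Fin n → ℝ} {ε : ℝ}

theorem wcObj_eq_coe (hφ : PhiOK φ) (hq : ∀ i, φ (q i / p i) ≠ ⊤) :
    wcObj φ p f ε q = ((∑ i, q i * f i + ε⁻¹ * ∑ i, p i * phiR φ (q i / p i) : ℝ) : EReal) := by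
  simp only [wcObj, one_div, EReal.coe_add, EReal.coe_mul, EReal.coe_finset_sum_s16,
    hφ.coe_phiR (hq _)]

theorem wcObj_eq_top (hφ : PhiOK φ) (hp : ∀ i, 0 < p i) (hε : 0 < ε) {j : Fin n}
    (hj : φ (q j / p j) = ⊤) : wcObj φ p f ε q = ⊤ := by
  have hsum : ∑ i, ((p i : ℝ) : EReal) * φ (q i / p i) = ⊤ := by
    refine top_le_iff.mp ?_
    calc ⊤ = ((p j : ℝ) : EReal) * φ (q j / p j) := by rw [hj, EReal.coe_mul_top_of_pos (hp j)]
      _ ≤ _ := Finset.single_le_sum (f := fun i => ((p i : ℝ) : EReal) * φ (q i / p i))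
        (fun i _ => mul_nonneg (EReal.coe_nonneg.mpr (hp i).le) (hφ.nonneg _)) (Finset.mem_univ j)
  rw [wcObj, hsum, EReal.coe_mul_top_of_pos (one_div_pos.mpr hε), EReal.coe_add_top]

theorem wcObj_lt_of_ne (hφ : PhiOK φ) (hp : ∀ i, 0 < p i) (hε : 0 < ε) {B : Set ℝ}
    (hBo : IsOpen B) (hB : StrictConvexOn ℝ B (phiR φ)) (hBD : B ⊆ {z | φ z ≠ ⊤}) {s : ℝ}
    {z : Fin n → ℝ} (hz : ∀ i, z i ∈ B) (hdz : ∀ i, HasDerivAt (phiR φ) (s - ε * f i) (z i))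
    (hsum : ∑ i, q i = ∑ i, p i * z i) (hne : q ≠ fun i => p i * z i) :
    wcObj φ p f ε (fun i => p i * z i) < wcObj φ p f ε q := by
  have hpz : ∀ i, p i * z i / p i = z i := fun i => mul_div_cancel_left₀ _ (hp i).ne'
  rw [wcObj_eq_coe hφ fun i => by rw [hpz]; exact hBD (hz i)]
  simp only [hpz]
  by_cases hq : ∀ i, φ (q i / p i) ≠ ⊤
  · rw [wcObj_eq_coe hφ hq, EReal.coe_lt_coe_iff]
    refine sum_mul_add_inv_mul_sum_lt (D := {z | φ z ≠ ⊤}) (s := s) hε hp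
      (fun i w hw hwz => ?_) hq hsum hne
    exact hφ.convexOn_phiR.add_mul_sub_lt_of_strictConvexOn hB hBD (hBo.mem_nhds (hz i))
      (hdz i) hw hwz
  · push Not at hq
    obtain ⟨j, hj⟩ := hq
    rw [wcObj_eq_top hφ hp hε hj]
    exact EReal.coe_lt_top _

theorem wcObj_isUniqueMin (hφ : PhiOK φ) (hp : ∀ i, 0 < p i) (hε : 0 < ε) {B : Set ℝ}
    (hBo : IsOpen B) (hB : StrictConvexOn ℝ B (phiR φ)) (hBD : B ⊆ {z | φ z ≠ ⊤}) {s : ℝ}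
    {z : Fin n → ℝ} (hz : ∀ i, z i ∈ B) (hdz : ∀ i, HasDerivAt (phiR φ) (s - ε * f i) (z i))
    (hsum : ∑ i, p i * z i = 1) :
    ((∀ i, 0 ≤ p i * z i) ∧ ∑ i, p i * z i = 1) ∧
      (∀ q : Fin n → ℝ, ∑ i, q i = 1 →
        wcObj φ p f ε (fun i => p i * z i) ≤ wcObj φ p f ε q) ∧
      (∀ q : Fin n → ℝ, ∑ i, q i = 1 →
        wcObj φ p f ε q ≤ wcObj φ p f ε (fun i => p i * z i) → q = fun i => p i * z i) := by
  have hlt := fun (q : Fin n → ℝ) (hq : ∑ i, q i = 1) =>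
    wcObj_lt_of_ne hφ hp hε hBo hB hBD hz hdz (hq.trans hsum.symm)
  refine ⟨⟨fun i => mul_nonneg (hp i).le (hφ.nonneg_of_ne_top (hBD (hz i))), hsum⟩,
    fun q hq => ?_, fun q hq hle => ?_⟩
  · rcases eq_or_ne q (fun i => p i * z i) with rfl | hne
    · exact le_rfl
    · exact (hlt q hq hne).le
  · by_contra hne
    exact hle.not_gt (hlt q hq hne)

end WorstCase

section Normalization

variable {ι : Type*} [Fintype ι] {ψ : ℝ → ℝ} {ψ' y₀ : ℝ} {p : ι → ℝ} (f : ι → ℝ)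

theorem hasStrictFDerivAt_sum_mul_comp_sub (hψ : HasStrictDerivAt ψ ψ' y₀) (hp : ∑ i, p i = 1) :
    HasStrictFDerivAt (fun x : ℝ × ℝ => ∑ i, p i * ψ (x.2 - x.1 * f i))
      (ψ' • (ContinuousLinearMap.snd ℝ ℝ ℝ - (∑ i, p i * f i) • ContinuousLinearMap.fst ℝ ℝ ℝ))
      ((0 : ℝ), y₀) := by
  have hterm : ∀ i, HasStrictFDerivAt (fun x : ℝ × ℝ => p i * ψ (x.2 - x.1 * f i))
      (p i • ψ' • (ContinuousLinearMap.snd ℝ ℝ ℝ - f i • ContinuousLinearMap.fst ℝ ℝ ℝ))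
      ((0 : ℝ), y₀) := fun i =>
    (hψ.comp_hasStrictFDerivAt_of_eq _
      (hasStrictFDerivAt_snd.sub (hasStrictFDerivAt_fst.mul_const (f i))) (by simp)).const_mul _
  refine (HasStrictFDerivAt.fun_sum fun i _ => hterm i).congr_fderiv
    (ContinuousLinearMap.ext fun x => ?_)
  have hterm_apply : ∀ i, p i * (ψ' * (x.2 - f i * x.1))
      = ψ' * x.2 * p i - ψ' * x.1 * (p i * f i) := fun i => by ring
  simp [hterm_apply, Finset.sum_sub_distrib, ← Finset.mul_sum, hp]
  ring

theorem exists_shift_sum_mul_eq_one (hψ : HasStrictDerivAt ψ ψ' y₀) (hψ' : ψ' ≠ 0)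
    (hψ₀ : ψ y₀ = 1) (hp : ∑ i, p i = 1) :
    ∃ s : ℝ → ℝ, s 0 = y₀ ∧ HasDerivAt s (∑ i, p i * f i) 0 ∧
      ∀ᶠ ε in 𝓝 0, ∑ i, p i * ψ (s ε - ε * f i) = 1 := by
  set μ := ∑ i, p i * f i
  have hF := hasStrictFDerivAt_sum_mul_comp_sub f hψ hp
  have hinv : ((ψ' • (ContinuousLinearMap.snd ℝ ℝ ℝ - μ • ContinuousLinearMap.fst ℝ ℝ ℝ)).comp
      (ContinuousLinearMap.inr ℝ ℝ ℝ)).IsInvertible :=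
    ⟨ContinuousLinearEquiv.unitsEquivAut ℝ (Units.mk0 ψ' hψ'), by ext; simp⟩
  set s := hF.implicitFunctionOfProdDomain hinv
  obtain ⟨L, hsL⟩ : ∃ L, HasStrictFDerivAt s L 0 :=
    ⟨_, hF.hasStrictFDerivAt_implicitFunctionOfProdDomain hinv⟩
  have hs0 : s 0 = y₀ :=
    tendsto_nhds_unique hsL.continuousAt.tendsto (hF.tendsto_implicitFunctionOfProdDomain hinv)
  have hFs : ∀ᶠ ε in 𝓝 0, ∑ i, p i * ψ (s ε - ε * f i) = 1 := by
    simpa [hψ₀, ← Finset.sum_mul, hp] using hF.eventually_apply_implicitFunctionOfProdDomain hinv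
  refine ⟨s, hs0, ?_, hFs⟩
  have hs : HasDerivAt s (L 1) 0 := hsL.hasStrictDerivAt.hasDerivAt
  -- differentiate `∑ i, p i * ψ (s ε - ε * f i) = 1` at `ε = 0`
  have hcurve : HasDerivAt (fun ε => (ε, s ε)) ((1 : ℝ), L 1) 0 := (hasDerivAt_id 0).prodMk hs
  have h1 := hF.hasFDerivAt.comp_hasDerivAt_of_eq 0 hcurve (by rw [hs0])
  have h2 : HasDerivAt (fun ε => ∑ i, p i * ψ (s ε - ε * f i)) 0 0 :=
    (hasDerivAt_const 0 (1 : ℝ)).congr_of_eventuallyEq hFs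
  have hL : L 1 = μ := by
    simpa [hψ', sub_eq_zero] using h1.unique h2
  exact hL ▸ hs

end Normalization

theorem hasDerivAt_sum_mul_comp_sub_mul {ι : Type*} [Fintype ι] {ψ : ℝ → ℝ} {ψ' y₀ : ℝ}
    (hψ : HasDerivAt ψ ψ' y₀) {p f : ι → ℝ} {s : ℝ → ℝ} (hs0 : s 0 = y₀)
    (hs : HasDerivAt s (∑ i, p i * f i) 0) :
    HasDerivAt (fun ε => ∑ i, p i * ψ (s ε - ε * f i) * f i)
      (-ψ' * (∑ i, p i * f i ^ 2 - (∑ i, p i * f i) ^ 2)) 0 := by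
  have hterm : ∀ i, HasDerivAt (fun ε => p i * ψ (s ε - ε * f i) * f i)
      (p i * (ψ' * (∑ j, p j * f j - f i)) * f i) 0 := fun i => by
    have hin : HasDerivAt (fun ε => s ε - ε * f i) (∑ j, p j * f j - f i) 0 := by
      simpa using hs.fun_sub ((hasDerivAt_id 0).mul_const (f i))
    exact ((hψ.comp_of_eq 0 hin (by simp [hs0])).const_mul (p i)).mul_const (f i)
  refine (HasDerivAt.fun_sum fun i _ => hterm i).congr_deriv ?_
  have hterm_eq : ∀ i, p i * (ψ' * (∑ j, p j * f j - f i)) * f i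
      = ψ' * (∑ j, p j * f j) * (p i * f i) - ψ' * (p i * f i ^ 2) := fun i => by ring
  simp only [hterm_eq, Finset.sum_sub_distrib, ← Finset.mul_sum]
  ring

namespace PhiSmooth

variable {φ : ℝ → EReal}

theorem hasStrictDerivAt_deriv_phiR (hφs : PhiSmooth φ) :
    HasStrictDerivAt (deriv (phiR φ)) (phiPP1 φ) 1 := by
  obtain ⟨U, hU, hU1, -, hC2, -⟩ := hφs
  exact ((hC2.deriv_of_isOpen hU (by norm_num)).contDiffAt (hU.mem_nhds hU1)).hasStrictDerivAt
    one_ne_zero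

theorem exists_strictConvexOn_ball (hφs : PhiSmooth φ) :
    ∃ δ > 0, Metric.ball 1 δ ⊆ {z | φ z ≠ ⊤} ∧ StrictConvexOn ℝ (Metric.ball 1 δ) (phiR φ) ∧
      ∀ z ∈ Metric.ball 1 δ, HasDerivAt (phiR φ) (deriv (phiR φ) z) z := by
  obtain ⟨U, hU, hU1, hφU, hC2, hpos⟩ := hφs
  have hcont : ContinuousOn (deriv (deriv (phiR φ))) U :=
    (hC2.deriv_of_isOpen hU (by norm_num)).continuousOn_deriv_of_isOpen hU le_rfl
  have hV : U ∩ deriv (deriv (phiR φ)) ⁻¹' Ioi 0 ∈ 𝓝 1 :=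
    (hcont.isOpen_inter_preimage hU isOpen_Ioi).mem_nhds ⟨hU1, hpos⟩
  obtain ⟨δ, hδ, hball⟩ := Metric.mem_nhds_iff.mp hV
  refine ⟨δ, hδ, fun z hz => ?_, ?_, fun z hz => ?_⟩
  · exact (hφU z (hball hz).1).trans_ne (EReal.coe_ne_top _)
  · refine strictConvexOn_of_deriv2_pos (convex_ball 1 δ)
      (hC2.continuousOn.mono fun z hz => (hball hz).1) fun z hz => ?_
    rw [Metric.isOpen_ball.interior_eq] at hz
    simpa using (hball hz).2
  · exact ((hC2.contDiffAt (hU.mem_nhds (hball hz).1)).differentiableAt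
      (by norm_num)).hasDerivAt

end PhiSmooth

/-- Worst-case sensitivity equals the scaled variance of the reward (equation (19)):
for small `ε > 0` the worst-case distribution `Q(ε)` exists and is unique, and
`−(d/dε) E_{Q(ε)}[f] |_{ε=0} = (1/φ''(1)) Var_{P_n}[f]` (as a right derivative). -/
theorem worst_case_sensitivity_eq_variance
    (φ : ℝ → EReal) (hφ : PhiOK φ) (hφs : PhiSmooth φ)
    {n : ℕ} (p : Fin n → ℝ) (hp : ∀ i, 0 < p i) (hps : ∑ i, p i = 1)
    (f : Fin n → ℝ) :
    ∃ ε₀ > (0 : ℝ), ∃ Q : ℝ → Fin n → ℝ,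
      Q 0 = p ∧
      (∀ ε ∈ Set.Ioo (0 : ℝ) ε₀,
        ((∀ i, 0 ≤ Q ε i) ∧ ∑ i, Q ε i = 1) ∧
        (∀ q : Fin n → ℝ, (∀ i, 0 ≤ q i) → ∑ i, q i = 1 →
          wcObj φ p f ε (Q ε) ≤ wcObj φ p f ε q) ∧
        (∀ q : Fin n → ℝ, (∀ i, 0 ≤ q i) → ∑ i, q i = 1 →
          wcObj φ p f ε q ≤ wcObj φ p f ε (Q ε) → q = Q ε)) ∧
      HasDerivWithinAt (fun ε => ∑ i, Q ε i * f i)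
        (-(1 / phiPP1 φ) * ((∑ i, p i * f i ^ 2) - (∑ i, p i * f i) ^ 2))
        (Set.Ici 0) 0 := by
  obtain ⟨δ, hδ, hBD, hBconv, hBderiv⟩ := hφs.exists_strictConvexOn_ball
  have hc : phiPP1 φ ≠ 0 := by
    obtain ⟨-, -, -, -, -, hpos⟩ := hφs
    exact hpos.ne'
  have hg := hφs.hasStrictDerivAt_deriv_phiR
  set g := deriv (phiR φ)
  set ψ := hg.localInverse g (phiPP1 φ) 1 hc
  have hψ : HasStrictDerivAt ψ (phiPP1 φ)⁻¹ (g 1) := hg.to_localInverse hc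
  have hψ₁ : ψ (g 1) = 1 := HasStrictFDerivAt.localInverse_apply_image _
  obtain ⟨s, hs0, hs, hsum⟩ := exists_shift_sum_mul_eq_one f hψ (inv_ne_zero hc) hψ₁ hps
  have hψB : ∀ᶠ y in 𝓝 (g 1), ψ y ∈ Metric.ball 1 δ ∧ g (ψ y) = y := by
    refine Eventually.and ?_ (hg.eventually_right_inverse hc)
    exact hψ.hasDerivAt.continuousAt.preimage_mem_nhds
      (by rw [hψ₁]; exact Metric.ball_mem_nhds 1 hδ)
  have hnear : ∀ᶠ ε in 𝓝 0, ∀ i,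
      ψ (s ε - ε * f i) ∈ Metric.ball 1 δ ∧ g (ψ (s ε - ε * f i)) = s ε - ε * f i := by
    refine eventually_all.mpr fun i => Tendsto.eventually ?_ hψB
    simpa [hs0] using hs.continuousAt.tendsto.sub ((continuous_mul_const (f i)).tendsto 0)
  obtain ⟨ε₀, hε₀, hε₀P⟩ := Metric.eventually_nhds_iff.mp (hnear.and hsum)
  refine ⟨ε₀, hε₀, fun ε i => p i * ψ (s ε - ε * f i), by simp [hs0, hψ₁], fun ε hε => ?_, ?_⟩
  · obtain ⟨hz, hQ1⟩ := hε₀P (by rw [Real.dist_0_eq_abs, abs_of_pos hε.1]; exact hε.2)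
    obtain ⟨hQ, hmin, huniq⟩ := wcObj_isUniqueMin (f := f) hφ hp hε.1 Metric.isOpen_ball hBconv
      hBD (fun i => (hz i).1) (fun i => (hz i).2 ▸ hBderiv _ (hz i).1) hQ1
    exact ⟨hQ, fun q _ => hmin q, fun q _ => huniq q⟩
  · simpa [one_div] using (hasDerivAt_sum_mul_comp_sub_mul hψ.hasDerivAt hs0 hs).hasDerivWithinAt
end
end

section
/- First-order expansion of the in-sample variance and worst-case sensitivity along the DRO/DOO family (equation (20)). Fix data points Y_1, …, Y_n ∈ ℝ^l and a probability vector p with p_i > 0; suppose each x ↦ f(x, Y_i) is twice continuously differentiable, let x₀ ∈ ℝ^d, H := Σ_i p_i ∇²_x f(x₀, Y_i) be invertible, β := Cov_{P_n}[∇_x f(x₀, Y), f(x₀, Y)] ∈ ℝ^d, and let x(δ) be any curve with x(δ) = x₀ + δπ + o(δ) as δ → 0 where π = (1/φ''(1)) H^{−1} β. Then Var_{P_n}[f(x(δ), Y)] = Var_{P_n}[f(x₀, Y)] + (2δ/φ''(1)) βᵀ H^{−1} β + o(δ) as δ → 0; equivalently, the worst-case sensitivity S(δ) := (1/φ''(1))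 Var_{P_n}[f(x(δ), Y)] satisfies S(δ) = S(0) + (2δ/φ''(1)²) βᵀ H^{−1} β + o(δ). -/
open Filter Asymptotics Matrix
open scoped BigOperators Topology

noncomputable section

/-- The gradient of `g : ℝ^d → ℝ`, as the vector of partial derivatives. -/
def gradVec {d : ℕ} (g : (Fin d → ℝ) → ℝ) (x : Fin d → ℝ) : Fin d → ℝ :=
  fun i => fderiv ℝ g x (Pi.single i 1)

/-- The Hessian matrix of `g : ℝ^d → ℝ`. -/
def hessMat {d : ℕ} (g : (Fin d → ℝ) → ℝ) (x : Fin d → ℝ) : Matrix (Fin d) (Fin d) ℝ :=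
  Matrix.of fun i j => fderiv ℝ (fun z => fderiv ℝ g z (Pi.single j 1)) x (Pi.single i 1)

/-- Empirical variance `Var_{P_n}[g] = Σ p_i g_i² − (Σ p_i g_i)²`. -/
def empVar {n : ℕ} (p : Fin n → ℝ) (g : Fin n → ℝ) : ℝ :=
  (∑ i, p i * g i ^ 2) - (∑ i, p i * g i) ^ 2

/-! Along the curve, the variance has derivative `2 Cov[f(x₀, Y), ∇f(x₀, Y) ⬝ π]` at `δ = 0`.
The covariance is linear in its second argument, so this equals `2 π ⬝ β`, and
`π = H⁻¹β / φ''(1)` turns it into `(2/φ''(1)) βᵀ H⁻¹ β`. -/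

def empCov {n : ℕ} (p : Fin n → ℝ) (u v : Fin n → ℝ) : ℝ :=
  (∑ i, p i * (u i * v i)) - (∑ i, p i * u i) * (∑ i, p i * v i)

lemma empCov_comm {n : ℕ} (p u v : Fin n → ℝ) : empCov p u v = empCov p v u := by
  simp only [empCov, mul_comm (u _), mul_comm (∑ i, p i * u i)]

lemma empCov_eq_dotProduct {n : ℕ} (p u v : Fin n → ℝ) :
    empCov p u v = (fun i => p i * (u i - ∑ j, p j * u j)) ⬝ᵥ v := by
  rw [empCov, dotProduct, Finset.mul_sum, ← Finset.sum_sub_distrib]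
  exact Finset.sum_congr rfl fun i _ => by ring

lemma empCov_mulVec {n d : ℕ} (p u : Fin n → ℝ) (w : Matrix (Fin n) (Fin d) ℝ)
    (v : Fin d → ℝ) :
    empCov p u (w *ᵥ v) = (fun a => empCov p u (fun i => w i a)) ⬝ᵥ v := by
  simp only [empCov_eq_dotProduct, dotProduct_mulVec]
  rfl

lemma hasDerivAt_empVar {n : ℕ} (p : Fin n → ℝ) {g : ℝ → Fin n → ℝ} {g' : Fin n → ℝ} {t : ℝ}
    (hg : ∀ i, HasDerivAt (fun s => g s i) (g' i) t) :
    HasDerivAt (fun s => empVar p (g s)) (2 * empCov p (g t) g') t := by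
  have hmean : HasDerivAt (fun s => ∑ i, p i * g s i) (∑ i, p i * g' i) t :=
    HasDerivAt.fun_sum fun i _ => (hg i).const_mul (p i)
  have hsq : HasDerivAt (fun s => ∑ i, p i * g s i ^ 2) (∑ i, p i * (2 * g t i * g' i)) t :=
    HasDerivAt.fun_sum fun i _ => by simpa using ((hg i).fun_pow 2).const_mul (p i)
  refine (hsq.sub (hmean.fun_pow 2)).congr_deriv ?_
  have hsq_deriv : ∑ i, p i * (2 * g t i * g' i) = 2 * ∑ i, p i * (g t i * g' i) := by
    rw [Finset.mul_sum]
    exact Finset.sum_congr rfl fun i _ => by ring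
  rw [hsq_deriv, empCov]
  norm_num only [pow_one]
  ring

lemma fderiv_apply_eq_gradVec_dotProduct {d : ℕ} (g : (Fin d → ℝ) → ℝ) (x v : Fin d → ℝ) :
    fderiv ℝ g x v = gradVec g x ⬝ᵥ v := by
  conv_lhs => rw [pi_eq_sum_univ' v]
  simp [map_sum, gradVec, dotProduct, mul_comm]

lemma hasDerivAt_zero_of_isLittleO_sub_affine {E : Type*} [NormedAddCommGroup E]
    [NormedSpace ℝ E] {x : ℝ → E} {x₀ v : E}
    (hx : (fun δ => x δ - (x₀ + δ • v)) =o[𝓝 (0 : ℝ)] fun δ => δ) :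
    x 0 = x₀ ∧ HasDerivAt x v 0 := by
  have hx0 : x 0 = x₀ := by simpa [sub_eq_zero] using (hx.def one_pos).self_of_nhds
  refine ⟨hx0, hasDerivAt_iff_isLittleO.mpr ?_⟩
  simpa [hx0, sub_sub] using hx

lemma HasDerivAt.isLittleO_sub_affine {f : ℝ → ℝ} {f' : ℝ} (hf : HasDerivAt f f' 0) :
    (fun δ => f δ - f 0 - δ * f') =o[𝓝 (0 : ℝ)] fun δ => δ := by
  simpa using hasDerivAt_iff_isLittleO.mp hf

theorem in_sample_variance_expansion_general
    (φ : ℝ → EReal)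
    {d l n : ℕ} (Y : Fin n → (Fin l → ℝ))
    (p : Fin n → ℝ)
    (f : (Fin d → ℝ) → (Fin l → ℝ) → ℝ)
    (hsmooth : ∀ i, ContDiff ℝ 2 (fun x => f x (Y i)))
    (x₀ : Fin d → ℝ)
    (H : Matrix (Fin d) (Fin d) ℝ)
    (β : Fin d → ℝ)
    (hβdef : β = fun a =>
      (∑ i, p i * (gradVec (fun x => f x (Y i)) x₀ a * f x₀ (Y i)))
        - (∑ i, p i * gradVec (fun x => f x (Y i)) x₀ a) * (∑ i, p i * f x₀ (Y i)))
    (x : ℝ → (Fin d → ℝ))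
    (hx : (fun δ => x δ - (x₀ + δ • ((1 / phiPP1 φ) • H⁻¹.mulVec β)))
      =o[𝓝 (0 : ℝ)] fun δ => δ) :
    ((fun δ => empVar p (fun i => f (x δ) (Y i)) - empVar p (fun i => f x₀ (Y i))
        - 2 * δ / phiPP1 φ * (β ⬝ᵥ H⁻¹.mulVec β)) =o[𝓝 (0 : ℝ)] fun δ => δ) ∧
    ((fun δ => (1 / phiPP1 φ) * empVar p (fun i => f (x δ) (Y i))
        - (1 / phiPP1 φ) * empVar p (fun i => f x₀ (Y i))
        - 2 * δ / phiPP1 φ ^ 2 * (β ⬝ᵥ H⁻¹.mulVec β)) =o[𝓝 (0 : ℝ)] fun δ => δ) := by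
  set c := phiPP1 φ
  set π := (1 / c) • H⁻¹ *ᵥ β
  set G : Matrix (Fin n) (Fin d) ℝ := Matrix.of fun i => gradVec (fun u => f u (Y i)) x₀
  obtain ⟨hx0, hxd⟩ := hasDerivAt_zero_of_isLittleO_sub_affine hx
  have hcomp : ∀ i, HasDerivAt (fun δ => f (x δ) (Y i)) ((G *ᵥ π) i) 0 := fun i => by
    have hf : HasFDerivAt (fun u => f u (Y i)) (fderiv ℝ (fun u => f u (Y i)) x₀) (x 0) :=
      hx0 ▸ ((hsmooth i).differentiable (by norm_num) x₀).hasFDerivAt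
    have hcomp_i := hf.comp_hasDerivAt 0 hxd
    rwa [fderiv_apply_eq_gradVec_dotProduct] at hcomp_i
  have hβ : (fun a => empCov p (fun i => f x₀ (Y i)) (fun i => G i a)) = β := by
    rw [hβdef]
    funext a
    rw [empCov_comm]
    rfl
  have hvar := (hasDerivAt_empVar p hcomp).isLittleO_sub_affine
  rw [hx0, empCov_mulVec, hβ] at hvar
  have h1 : (fun δ => empVar p (fun i => f (x δ) (Y i)) - empVar p (fun i => f x₀ (Y i))
      - 2 * δ / c * (β ⬝ᵥ H⁻¹ *ᵥ β)) =o[𝓝 (0 : ℝ)] fun δ => δ := by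
    refine hvar.congr_left fun δ => ?_
    simp only [π, dotProduct_smul, smul_eq_mul]
    ring
  exact ⟨h1, (h1.const_mul_left (1 / c)).congr_left fun δ => by ring⟩

/-- First-order expansion of the in-sample variance and of the worst-case sensitivity
along the DRO/DOO solution family (equation (20)):
`Var_{P_n}[f(x(δ), Y)] = Var_{P_n}[f(x₀, Y)] + (2δ/φ''(1)) βᵀ H⁻¹ β + o(δ)`, and the
worst-case sensitivity `S(δ) = (1/φ''(1)) Var_{P_n}[f(x(δ), Y)]` satisfies
`S(δ) = S(0) + (2δ/φ''(1)²) βᵀ H⁻¹ β + o(δ)`. -/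
theorem in_sample_variance_expansion
    (φ : ℝ → EReal) (hφ : PhiOK φ) (hφs : PhiSmooth φ)
    {d l n : ℕ} (Y : Fin n → (Fin l → ℝ))
    (p : Fin n → ℝ) (hp : ∀ i, 0 < p i) (hps : ∑ i, p i = 1)
    (f : (Fin d → ℝ) → (Fin l → ℝ) → ℝ)
    (hsmooth : ∀ i, ContDiff ℝ 2 (fun x => f x (Y i)))
    (x₀ : Fin d → ℝ)
    (H : Matrix (Fin d) (Fin d) ℝ)
    (hHdef : H = ∑ i, p i • hessMat (fun x => f x (Y i)) x₀)
    (hH : H.det ≠ 0)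
    (β : Fin d → ℝ)
    (hβdef : β = fun a =>
      (∑ i, p i * (gradVec (fun x => f x (Y i)) x₀ a * f x₀ (Y i)))
        - (∑ i, p i * gradVec (fun x => f x (Y i)) x₀ a) * (∑ i, p i * f x₀ (Y i)))
    (x : ℝ → (Fin d → ℝ))
    (hx : (fun δ => x δ - (x₀ + δ • ((1 / phiPP1 φ) • H⁻¹.mulVec β)))
      =o[𝓝 (0 : ℝ)] fun δ => δ) :
    ((fun δ => empVar p (fun i => f (x δ) (Y i)) - empVar p (fun i => f x₀ (Y i))
        - 2 * δ / phiPP1 φ * (β ⬝ᵥ H⁻¹.mulVec β)) =o[𝓝 (0 : ℝ)] fun δ => δ) ∧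
    ((fun δ => (1 / phiPP1 φ) * empVar p (fun i => f (x δ) (Y i))
        - (1 / phiPP1 φ) * empVar p (fun i => f x₀ (Y i))
        - 2 * δ / phiPP1 φ ^ 2 * (β ⬝ᵥ H⁻¹.mulVec β)) =o[𝓝 (0 : ℝ)] fun δ => δ) :=
  in_sample_variance_expansion_general φ Y p f hsmooth x₀ H β hβdef x hx

end
end
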